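/- arXiv:2501.08823 — 2 statements merged into one kernel-verified Lean document; each statement's English description precedes it below -/
import Mathlib

section
/- Every antidiagonal of the Hurt-Sada array is nonincreasing: for all n ∈ ℕ and all i < n, A(i, n−i) ≥ A(i+1, n−(i+1)). -/
/-- The Hurt-Sada array `A : ℕ → ℕ → ℕ`.  Row `0` is the identity sequence;
row `n+1` is obtained from row `n` by moving the entry `n+1` (located at the unique
position `p` with `A n p = n+1`) by `n+1` places to the right, shifting the jumped-over
entries one place left. -/
noncomputable def A : ℕ → ℕ → ℕ
  | 0, k => k
  | n + 1, j =>
    let p := sInf {i | A n i = n + 1}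
    if j < p then A n j
    else if j < p + (n + 1) then A n (j + 1)
    else if j = p + (n + 1) then n + 1
    else A n j

lemma A_zero (k : ℕ) : A 0 k = k := by rw [A]

/-- The structural invariant of row `m`:  `P t` is the position of the value `m+1+t`,
positions increase by 1 or 2, entries left of `P 0` are fixed points, a gap of size 2
after `P t` contains the value `P t - t`, and from index `P 0` on the value `m+1+t`
sits at its own position. -/
def RowInv (m : ℕ) (P : ℕ → ℕ) : Prop :=
  (∀ t, P (t+1) = P t + 1 ∨ P (t+1) = P t + 2) ∧
  (∀ t, A m (P t) = m + 1 + t) ∧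
  (∀ j < P 0, A m j = j) ∧
  (∀ t, P (t+1) = P t + 2 → A m (P t + 1) = P t - t) ∧
  (∀ t, P 0 ≤ t → P t = m + 1 + t)

/-- The position sequence for row `m+1`, given the one for row `m`. -/
def nextP (m : ℕ) (P : ℕ → ℕ) (t : ℕ) : ℕ :=
  if t < P 0 then P (t+1) - 1 else m + 2 + t

lemma nextP_lt {m : ℕ} {P : ℕ → ℕ} {t : ℕ} (ht : t < P 0) :
    nextP m P t = P (t+1) - 1 := if_pos ht

lemma nextP_ge {m : ℕ} {P : ℕ → ℕ} {t : ℕ} (ht : P 0 ≤ t) :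
    nextP m P t = m + 2 + t := if_neg (by omega)

lemma rowInv_zero : RowInv 0 (fun t => t + 1) := by
  refine ⟨fun t => Or.inl rfl, fun t => ?_, fun j hj => ?_, fun t ht => ?_, fun t _ => ?_⟩
  · show A 0 (t+1) = 0 + 1 + t
    rw [A_zero]; omega
  · have hj' : j < 1 := hj
    have hj0 : j = 0 := by omega
    show A 0 j = j
    rw [A_zero]
  · exact absurd (show t+1+1 = t+1+2 from ht) (by omega)
  · show t + 1 = 0 + 1 + t
    omega

section
variable {m : ℕ} {P : ℕ → ℕ} (h : RowInv m P)
include h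

lemma P_mono : StrictMono P := by
  apply strictMono_nat_of_lt_succ
  intro t
  rcases h.1 t with h1 | h1 <;> omega

lemma P_lower : ∀ t, P 0 + t ≤ P t := by
  intro t
  induction t with
  | zero => omega
  | succ t ih => rcases h.1 t with h1 | h1 <;> omega

lemma P0_le : P 0 ≤ m + 1 := by
  have h1 := h.2.2.2.2 (P 0) le_rfl
  have h2 := P_lower h (P 0)
  omega

lemma P0_pos : 1 ≤ P 0 := by
  by_contra hc
  have h0 : P 0 = 0 := by omega
  have := h.2.2.2.2 0 (by omega)
  omega

lemma sInf_eq : sInf {i | A m i = m + 1} = P 0 := by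
  have hmem : P 0 ∈ {i | A m i = m + 1} := by
    have := h.2.1 0
    simpa using this
  refine le_antisymm (Nat.sInf_le hmem) ?_
  by_contra hc
  push_neg at hc
  have hlt : sInf {i | A m i = m + 1} < P 0 := hc
  have h2 : A m (sInf {i | A m i = m + 1}) = m + 1 :=
    Nat.sInf_mem ⟨P 0, hmem⟩
  have h3 := h.2.2.1 _ hlt
  have := P0_le h
  omega

lemma A_succ_lt {j : ℕ} (hj : j < P 0) : A (m+1) j = A m j := by
  rw [A]
  simp only [sInf_eq h]
  rw [if_pos hj]

lemma A_succ_mid {j : ℕ} (hj1 : P 0 ≤ j) (hj2 : j < P 0 + (m+1)) :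
    A (m+1) j = A m (j+1) := by
  rw [A]
  simp only [sInf_eq h]
  rw [if_neg (by omega), if_pos hj2]

lemma A_succ_eq : A (m+1) (P 0 + (m+1)) = m + 1 := by
  rw [A]
  simp only [sInf_eq h]
  simp

lemma A_succ_gt {j : ℕ} (hj : P 0 + (m+1) < j) : A (m+1) j = A m j := by
  rw [A]
  simp only [sInf_eq h]
  rw [if_neg (by omega), if_neg (by omega), if_neg (by omega)]

lemma tail_id : ∀ j, P 0 + m + 1 ≤ j → A m j = j := by
  intro j hj
  have h5 := h.2.2.2.2
  have ht : P (j - (m+1)) = j := by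
    rw [h5 (j - (m+1)) (by omega)]
    omega
  have := h.2.1 (j - (m+1))
  rw [ht] at this
  omega

lemma rowInv_step : RowInv (m+1) (nextP m P) := by
  have hmono := P_mono h
  have hlow := P_lower h
  have h1 := h.1
  have h2 := h.2.1
  have h4 := h.2.2.2.1
  have h5 := h.2.2.2.2
  have hPP0 : P (P 0) = m + 1 + P 0 := h5 (P 0) le_rfl
  have hpos := P0_pos h
  have hub : ∀ t, t ≤ P 0 → P t ≤ P 0 + m + 1 := by
    intro t ht
    have := hmono.monotone ht
    omega
  have hN0 : nextP m P 0 = P 1 - 1 := nextP_lt hpos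
  refine ⟨?_, ?_, ?_, ?_, ?_⟩
  · -- steps
    intro t
    rcases lt_trichotomy (t+1) (P 0) with hc | hc | hc
    · rw [nextP_lt hc, nextP_lt (by omega)]
      have := hlow (t+1)
      rcases h1 (t+1) with hs | hs <;> omega
    · rw [nextP_ge (by omega), nextP_lt (by omega)]
      have hPt1 : P (t+1) = m + 1 + P 0 := by rw [hc]; exact hPP0
      omega
    · rw [nextP_ge (by omega), nextP_ge (by omega)]
      omega
  · -- values
    intro t
    by_cases hc : t < P 0
    · rw [nextP_lt hc]
      have hge : P 0 + (t+1) ≤ P (t+1) := hlow (t+1)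
      have hle : P (t+1) ≤ P 0 + m + 1 := hub (t+1) (by omega)
      rw [A_succ_mid h (by omega) (by omega)]
      have he : P (t+1) - 1 + 1 = P (t+1) := by omega
      rw [he, h2 (t+1)]
      omega
    · rw [nextP_ge (by omega)]
      rw [A_succ_gt h (by omega)]
      exact tail_id h (m+2+t) (by omega)
  · -- prefix
    intro j hj
    rw [hN0] at hj
    have hge : P 0 + 1 ≤ P 1 := hlow 1
    have hstep : P 1 = P 0 + 1 ∨ P 1 = P 0 + 2 := h1 0
    by_cases hc : j < P 0
    · rw [A_succ_lt h hc]
      exact h.2.2.1 j hc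
    · have hj0 : j = P 0 := by omega
      have hs2 : P 1 = P 0 + 2 := by omega
      rw [A_succ_mid h (by omega) (by omega), hj0]
      have hgap : A m (P 0 + 1) = P 0 - 0 := h4 0 hs2
      omega
  · -- gaps
    intro t hst
    rcases lt_trichotomy (t+1) (P 0) with hc | hc | hc
    · rw [nextP_lt hc, nextP_lt (by omega)] at hst
      rw [nextP_lt (by omega)]
      have hge1 : P 0 + (t+1) ≤ P (t+1) := hlow (t+1)
      have hge2 : P 0 + (t+1+1) ≤ P (t+1+1) := hlow (t+1+1)
      have hle : P (t+1+1) ≤ P 0 + m + 1 := hub (t+1+1) (by omega)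
      have hs2 : P (t+1+1) = P (t+1) + 2 := by omega
      have hP1 : P (t+1) - 1 + 1 = P (t+1) := by omega
      rw [hP1, A_succ_mid h (by omega) (by omega)]
      have := h4 (t+1) hs2
      omega
    · rw [nextP_lt (by omega)]
      have hPt1 : P (t+1) = m + 1 + P 0 := by rw [hc]; exact hPP0
      have hP1 : P (t+1) - 1 + 1 = P 0 + (m+1) := by omega
      rw [hP1, A_succ_eq h]
      omega
    · rw [nextP_ge (by omega), nextP_ge (by omega)] at hst
      omega
  · -- eventual identity
    intro t ht
    rw [hN0] at ht
    have hge : P 0 + 1 ≤ P 1 := hlow 1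
    rw [nextP_ge (by omega)]

lemma main_step (j : ℕ) : A (m+1) j ≤ A m (j+1) := by
  have hle := P0_le h
  rcases lt_trichotomy j (P 0) with hc | hc | hc
  · rw [A_succ_lt h hc, h.2.2.1 j hc]
    by_cases hc2 : j + 1 < P 0
    · rw [h.2.2.1 (j+1) hc2]; omega
    · have he : j + 1 = P 0 := by omega
      rw [he]
      have := h.2.1 0
      omega
  all_goals {
    rcases lt_trichotomy j (P 0 + (m+1)) with hd | hd | hd
    · rw [A_succ_mid h (by omega) hd]
    · rw [hd, A_succ_eq h, tail_id h (P 0 + (m+1) + 1) (by omega)]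
      omega
    · rw [A_succ_gt h hd, tail_id h j (by omega), tail_id h (j+1) (by omega)]
      omega }

end

lemma exists_rowInv : ∀ m, ∃ P, RowInv m P := by
  intro m
  induction m with
  | zero => exact ⟨_, rowInv_zero⟩
  | succ m ih =>
    obtain ⟨P, hP⟩ := ih
    exact ⟨_, rowInv_step hP⟩

theorem antidiagonal_nonincreasing (n : ℕ) :
    ∀ i < n, A (i + 1) (n - (i + 1)) ≤ A i (n - i) := by
  intro i hi
  obtain ⟨P, hP⟩ := exists_rowInv i
  have hn : n - i = (n - (i+1)) + 1 := by omega
  rw [hn]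
  exact main_step hP _
end

section
/- For every n ≥ 2, set h(n) = 2n + 4 − ⌊(n+3)φ⌋ and h'(n) = ⌊(n+2)/φ⌋ − 1, and let r(n) be the unique value appearing at least twice in the n-th antidiagonal of the Hurt-Sada array. Then the n-th antidiagonal has the following structure: A(i, n−i) = n − i for all 0 ≤ i < h(n); A(i, n−i) = r(n) for all h(n) ≤ i ≤ h'(n); and A(i, n−i) = n − i for all h'(n) < i ≤ n. -/
/-!
Write `p(u) = ⌊(u + 1)/φ⌋`. Since `φ = 1 + 1/φ` is irrational, `p(u) + u + 1 = ⌊(u + 1)φ⌋` and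
`p` satisfies the duality `x < p(y) ↔ p(x) + x < y`, from which all the combinatorics follows.
By induction on the rows one gets an explicit position for every value in every row; in
particular `u` sits at index `u` in row `m` whenever `m < p(u)` or `p(u) + u ≤ m`.

On the `n`-th antidiagonal put `c = p(n + 1) = ⌊(n + 2)/φ⌋` and `d = p(n + 2)`, so that
`⌊(n + 3)φ⌋ = d + n + 3` and `d ∈ {c, c + 1}`. Outside the block `n + 1 - d ≤ i < c` the entry of
row `i` is `n - i` at home; inside it, it is the single value `c` when `d = c + 1` (then
`p(c) + c = n + 1`), and `n + 1 - c` when `d = c` (then `p(n + 1 - c) + (n + 1 - c) = c - 1`).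
-/

/-- The golden ratio `(1 + √5)/2`. -/
noncomputable def phi : ℝ := (1 + Real.sqrt 5) / 2

open Real Function

lemma phi_eq_goldenRatio : phi = goldenRatio := rfl

lemma phi_pos : 0 < phi := goldenRatio_pos

lemma phi_eq_inv_add_one : phi = phi⁻¹ + 1 := by
  rw [phi_eq_goldenRatio, inv_goldenRatio, ← one_sub_goldenRatio]
  ring

/-- For `u ≥ 1` this is the index `p(u)` from which `u` jumps (`position_self_succ`). -/
noncomputable def jumpPos (u : ℕ) : ℕ := ⌊((u : ℝ) + 1) / phi⌋₊

lemma jumpPos_add_add_one (u : ℕ) : jumpPos u + u + 1 = ⌊((u : ℝ) + 1) * phi⌋₊ := by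
  have h : ((u : ℝ) + 1) * phi = ((u : ℝ) + 1) / phi + ((u + 1 : ℕ) : ℝ) := by
    conv_lhs => rw [phi_eq_inv_add_one]
    push_cast
    ring
  rw [h, Nat.floor_add_natCast (by positivity [phi_pos]), jumpPos, add_assoc]

-- The irrationality of `φ` makes `(x + 1) * φ ≤ y + 1` strict, so both floors can be taken.
lemma lt_jumpPos_iff (x y : ℕ) : x < jumpPos y ↔ jumpPos x + x < y := by
  have hirr : ((x : ℝ) + 1) * phi ≠ ((y + 1 : ℕ) : ℝ) := by
    have := (phi_eq_goldenRatio ▸ goldenRatio_irrational).natCast_mul (Nat.succ_ne_zero x)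
    push_cast at this
    exact this.ne_nat _
  calc x < jumpPos y ↔ ((x + 1 : ℕ) : ℝ) ≤ ((y : ℝ) + 1) / phi :=
        Nat.le_floor_iff (by positivity [phi_pos])
    _ ↔ ((x : ℝ) + 1) * phi ≤ (y + 1 : ℕ) := by push_cast; exact le_div_iff₀ phi_pos
    _ ↔ ((x : ℝ) + 1) * phi < (y + 1 : ℕ) := ⟨fun h => h.lt_of_ne hirr, le_of_lt⟩
    _ ↔ ⌊((x : ℝ) + 1) * phi⌋₊ < y + 1 := (Nat.floor_lt (by positivity [phi_pos])).symm
    _ ↔ jumpPos x + x < y := by rw [← jumpPos_add_add_one]; omega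

lemma jumpPos_le_iff (x y : ℕ) : jumpPos y ≤ x ↔ y ≤ jumpPos x + x := by
  simpa only [not_lt] using (lt_jumpPos_iff x y).not

lemma jumpPos_monotone : Monotone jumpPos := by
  intro y y' hy
  by_contra! h
  have := (lt_jumpPos_iff _ y).mp h
  exact (lt_irrefl _) ((lt_jumpPos_iff _ y').mpr (by omega))

lemma jumpPos_le_self (u : ℕ) : jumpPos u ≤ u := (jumpPos_le_iff u u).mpr (by omega)

lemma jumpPos_zero : jumpPos 0 = 0 := by
  simpa using jumpPos_le_self 0

lemma jumpPos_pos {u : ℕ} (hu : 0 < u) : 0 < jumpPos u := by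
  rwa [lt_jumpPos_iff, jumpPos_zero]

lemma jumpPos_succ_le (u : ℕ) : jumpPos (u + 1) ≤ jumpPos u + 1 := by
  have h₁ := (jumpPos_le_iff (jumpPos u) u).mp le_rfl
  have h₂ := jumpPos_monotone (Nat.le_add_right (jumpPos u) 1)
  exact (jumpPos_le_iff _ _).mpr (by omega)

def jumpIndex (p k j : ℕ) : ℕ :=
  if j < p then j else if j < p + k then j + 1 else if j = p + k then p else j

lemma jumpIndex_injective (p k : ℕ) : Injective (jumpIndex p k) := by
  intro a b h
  unfold jumpIndex at h
  split_ifs at h <;> omega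

lemma A_succ_apply {m p : ℕ} (hinj : Injective (A m)) (hp : A m p = m + 1) (j : ℕ) :
    A (m + 1) j = A m (jumpIndex p (m + 1) j) := by
  have hset : {i | A m i = m + 1} = {p} := by
    ext i
    exact ⟨fun hi => hinj (hi.trans hp.symm), fun hi => hi ▸ hp⟩
  rw [A, hset, csInf_singleton]
  unfold jumpIndex
  split_ifs <;> simp [hp]

/-- The value `u` stays at index `u` up to row `jumpPos u - 1`, then drifts left by one per row to
`jumpPos u` in row `u - 1`, jumps to `jumpPos u + u` in row `u`, and drifts left again until it is back at `u`
in row `jumpPos u + u`. -/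
noncomputable def position (m u : ℕ) : ℕ :=
  if u ≤ m then max u (jumpPos u + 2 * u - m) else min u (jumpPos u + u - 1 - m)

lemma position_zero (u : ℕ) : position 0 u = u := by
  rcases u.eq_zero_or_pos with rfl | hu
  · simp [position, jumpPos_zero]
  · have := jumpPos_pos hu
    unfold position
    split_ifs <;> omega

lemma position_self_succ (m : ℕ) : position m (m + 1) = jumpPos (m + 1) := by
  have := jumpPos_le_self (m + 1)
  unfold position
  split_ifs <;> omega

lemma jumpIndex_position (m u : ℕ) :
    jumpIndex (jumpPos (m + 1)) (m + 1) (position (m + 1) u) = position m u := by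
  obtain rfl | hu := eq_or_ne u (m + 1)
  · have := jumpPos_le_self (m + 1)
    unfold jumpIndex position
    split_ifs <;> omega
  have h₁ := lt_jumpPos_iff u (m + 1)
  have h₂ := lt_jumpPos_iff (m + 1) u
  have h₃ := jumpPos_le_self (m + 1)
  have h₄ : u ≤ m + 1 → jumpPos u ≤ jumpPos (m + 1) := fun h => jumpPos_monotone h
  have h₅ : m + 1 ≤ u → jumpPos (m + 1) ≤ jumpPos u := fun h => jumpPos_monotone h
  unfold jumpIndex position
  split_ifs <;> omega

lemma A_position_and_injective (m : ℕ) :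
    (∀ u, A m (position m u) = u) ∧ Injective (A m) := by
  induction m with
  | zero => exact ⟨fun u => by rw [position_zero]; rfl, fun a b h => h⟩
  | succ m ih =>
    obtain ⟨hpos, hinj⟩ := ih
    have hstep := A_succ_apply hinj (position_self_succ m ▸ hpos (m + 1))
    refine ⟨fun u => ?_, ?_⟩
    · rw [hstep, jumpIndex_position, hpos]
    · rw [show A (m + 1) = A m ∘ jumpIndex (jumpPos (m + 1)) (m + 1) from funext hstep]
      exact hinj.comp (jumpIndex_injective _ _)

lemma A_position (m u : ℕ) : A m (position m u) = u := (A_position_and_injective m).1 u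

lemma A_eq_self_of_jumpPos_add_le {m u : ℕ} (h : jumpPos u + u ≤ m) : A m u = u := by
  have hpos : position m u = u := by
    unfold position
    split_ifs <;> omega
  simpa only [hpos] using A_position m u

lemma A_eq_self_of_lt_jumpPos {m u : ℕ} (h : m < jumpPos u) : A m u = u := by
  have := jumpPos_le_self u
  have hpos : position m u = u := by
    unfold position
    split_ifs <;> omega
  simpa only [hpos] using A_position m u

lemma A_antidiag_of_add_jumpPos_le {n i : ℕ} (h : i + jumpPos (n + 2) ≤ n) :
    A i (n - i) = n - i := by
  apply A_eq_self_of_lt_jumpPos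
  have := (lt_jumpPos_iff (n - i) (n + 2)).not.mp (by omega)
  omega

lemma A_antidiag_of_jumpPos_le {n i : ℕ} (hc : jumpPos (n + 1) ≤ i) (hi : i ≤ n) :
    A i (n - i) = n - i := by
  apply A_eq_self_of_jumpPos_add_le
  have h₁ := (jumpPos_le_iff _ (n + 1)).mp le_rfl
  have h₂ := jumpPos_monotone (hc.trans i.le_succ)
  exact Nat.le_of_lt_succ ((lt_jumpPos_iff _ _).mp (by omega))

lemma A_antidiag_of_jumpPos_succ_eq_add_one {n i : ℕ}
    (h : jumpPos (n + 2) = jumpPos (n + 1) + 1) (h₁ : n - jumpPos (n + 1) ≤ i)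
    (h₂ : i < jumpPos (n + 1)) : A i (n - i) = jumpPos (n + 1) := by
  set c := jumpPos (n + 1)
  have hlt := (lt_jumpPos_iff c (n + 2)).mp (by omega)
  have hge := (jumpPos_le_iff c (n + 1)).mp le_rfl
  have hpos : position i c = n - i := by
    unfold position
    split_ifs <;> omega
  simpa only [hpos] using A_position i c

lemma A_antidiag_of_jumpPos_succ_eq {n i : ℕ}
    (h : jumpPos (n + 2) = jumpPos (n + 1)) (h₁ : n + 1 - jumpPos (n + 1) ≤ i)
    (h₂ : i < jumpPos (n + 1)) : A i (n - i) = n + 1 - jumpPos (n + 1) := by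
  set c := jumpPos (n + 1)
  have hc := jumpPos_le_self (n + 1)
  have hge := (jumpPos_le_iff c (n + 2)).mp h.le
  have hlt := (lt_jumpPos_iff (c - 1) (n + 1)).mp (by omega)
  have hv₁ := (lt_jumpPos_iff (n + 1 - c) c).mp (by omega)
  have hv₂ := (jumpPos_le_iff (n + 1 - c) (c - 1)).mp (by omega)
  have hpos : position i (n + 1 - c) = n - i := by
    rw [position, if_pos (by omega)]
    omega
  simpa only [hpos] using A_position i (n + 1 - c)

lemma exists_const_on_antidiag_block (n : ℕ) : ∃ v, ∀ i, n + 1 - jumpPos (n + 2) ≤ i →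
    i < jumpPos (n + 1) → A i (n - i) = v := by
  have h₁ : jumpPos (n + 1) ≤ jumpPos (n + 2) := jumpPos_monotone (by omega)
  have h₂ : jumpPos (n + 2) ≤ jumpPos (n + 1) + 1 := jumpPos_succ_le (n + 1)
  rcases (by omega : jumpPos (n + 2) = jumpPos (n + 1) + 1 ∨ jumpPos (n + 2) = jumpPos (n + 1))
    with h | h
  · exact ⟨_, fun i hi₁ hi₂ => A_antidiag_of_jumpPos_succ_eq_add_one h (by omega) hi₂⟩
  · exact ⟨_, fun i hi₁ hi₂ => A_antidiag_of_jumpPos_succ_eq h (by omega) hi₂⟩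

lemma eq_of_repeated_of_block {g : ℕ → ℕ} {n a b v r : ℕ}
    (hout : ∀ i ≤ n, i < a ∨ b ≤ i → g i = n - i) (hin : ∀ i, a ≤ i → i < b → g i = v)
    (hr : ∃ i j, i < j ∧ j ≤ n ∧ g i = r ∧ g j = r) : r = v := by
  obtain ⟨i, j, hij, hjn, hi, hj⟩ := hr
  by_cases hi' : a ≤ i ∧ i < b
  · exact hi ▸ hin i hi'.1 hi'.2
  by_cases hj' : a ≤ j ∧ j < b
  · exact hj ▸ hin j hj'.1 hj'.2
  have := hout i (by omega) (by omega)
  have := hout j hjn (by omega)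
  omega

theorem antidiagonal_structure_general (n : ℕ) (r : ℕ)
    (hr : ∃ i j : ℕ, i < j ∧ j ≤ n ∧ A i (n - i) = r ∧ A j (n - j) = r) :
    (∀ i < 2 * n + 4 - ⌊((n : ℝ) + 3) * phi⌋₊, A i (n - i) = n - i) ∧
      (∀ i, 2 * n + 4 - ⌊((n : ℝ) + 3) * phi⌋₊ ≤ i → i ≤ ⌊((n : ℝ) + 2) / phi⌋₊ - 1 →
        A i (n - i) = r) ∧
      (∀ i, ⌊((n : ℝ) + 2) / phi⌋₊ - 1 < i → i ≤ n → A i (n - i) = n - i) := by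
  have hmul : ⌊((n : ℝ) + 3) * phi⌋₊ = jumpPos (n + 2) + (n + 2) + 1 := by
    rw [jumpPos_add_add_one]
    push_cast
    ring_nf
  have hdiv : ⌊((n : ℝ) + 2) / phi⌋₊ = jumpPos (n + 1) := by
    unfold jumpPos
    push_cast
    ring_nf
  rw [hmul, hdiv]
  have hc_pos := jumpPos_pos (by omega : 0 < n + 1)
  obtain ⟨v, hmid⟩ := exists_const_on_antidiag_block n
  have hout : ∀ i ≤ n, i < n + 1 - jumpPos (n + 2) ∨ jumpPos (n + 1) ≤ i → A i (n - i) = n - i :=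
    fun i hi h => h.elim (fun h => A_antidiag_of_add_jumpPos_le (by omega))
      (fun h => A_antidiag_of_jumpPos_le h hi)
  obtain rfl := eq_of_repeated_of_block hout hmid hr
  refine ⟨fun i hi => A_antidiag_of_add_jumpPos_le (by omega),
    fun i hi₁ hi₂ => hmid i (by omega) (by omega), fun i hi₁ hi₂ => hout i hi₂ (Or.inr (by omega))⟩

theorem antidiagonal_structure (n : ℕ) (hn : 2 ≤ n) (r : ℕ)
    (hr : ∃ i j : ℕ, i < j ∧ j ≤ n ∧ A i (n - i) = r ∧ A j (n - j) = r) :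
    (∀ i < 2 * n + 4 - ⌊((n : ℝ) + 3) * phi⌋₊, A i (n - i) = n - i) ∧
      (∀ i, 2 * n + 4 - ⌊((n : ℝ) + 3) * phi⌋₊ ≤ i → i ≤ ⌊((n : ℝ) + 2) / phi⌋₊ - 1 →
        A i (n - i) = r) ∧
      (∀ i, ⌊((n : ℝ) + 2) / phi⌋₊ - 1 < i → i ≤ n → A i (n - i) = n - i) :=
  antidiagonal_structure_general n r hr
end
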